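/- arXiv:1605.08591 — 2 statements merged into one kernel-verified Lean document; each statement's English description precedes it below -/
import Mathlib

section
/- Let I = {i₁ < i₂ < ⋯ < i_k} ⊆ {1,…,n−1} and let c = (c₁,…,c_{k+1}) be the composition of n with c₁+⋯+c_l = i_l for each l. Then the multiplication map S_{c₁+⋯+c_k, c_{k+1}} × ⋯ × S_{c₁+c₂, c₃} × S_{c₁, c₂} → S_n, (σ^k,…,σ^1) ↦ σ^k⋯σ^1, is a bijection onto {σ ∈ S_n : des(σ) ⊆ I}, where S_{c₁+⋯+c_l, c_{l+1}} is embedded in S_n acting on the first c₁+⋯+c_{l+1} letters. -/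
def IsShuffleOn {n : ℕ} (i p q : ℕ) (σ : Equiv.Perm (Fin n)) : Prop :=
  (∀ a : Fin n, ((a : ℕ) < i ∨ i + p + q ≤ (a : ℕ)) → σ a = a) ∧
  (∀ a b : Fin n, a < b → i ≤ (a : ℕ) → (b : ℕ) < i + p → σ.symm a < σ.symm b) ∧
  (∀ a b : Fin n, a < b → i + p ≤ (a : ℕ) → (b : ℕ) < i + p + q → σ.symm a < σ.symm b)

def Descents {n : ℕ} (σ : Equiv.Perm (Fin n)) : Set ℕ :=
  {i | 1 ≤ i ∧ ∃ h : i < n, σ.symm ⟨i - 1, by omega⟩ > σ.symm ⟨i, h⟩}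

/-- Partial sums of a composition: `partialSum c m = c 0 + c 1 + ⋯ + c (m-1)`
(the 0-indexed part `c l` is the paper's `c_{l+1}`). -/
def partialSum (c : ℕ → ℕ) (m : ℕ) : ℕ := ∑ l ∈ Finset.range m, c l

namespace DD

variable {n : ℕ}

lemma symm_fix {P : ℕ} {σ : Equiv.Perm (Fin n)} (h : ∀ a : Fin n, P ≤ (a:ℕ) → σ a = a)
    (a : Fin n) (ha : P ≤ (a:ℕ)) : σ.symm a = a := by
  conv_lhs => rw [← h a ha]
  exact σ.symm_apply_apply a

lemma shuffle_fix {P q : ℕ} {s : Equiv.Perm (Fin n)} (hs : IsShuffleOn 0 P q s)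
    (a : Fin n) (ha : P + q ≤ (a:ℕ)) : s a = a :=
  hs.1 a (Or.inr (by omega))

lemma shuffle_symm_fix {P q : ℕ} {s : Equiv.Perm (Fin n)} (hs : IsShuffleOn 0 P q s)
    (a : Fin n) (ha : P + q ≤ (a:ℕ)) : s.symm a = a :=
  symm_fix (fun b hb => shuffle_fix hs b hb) a ha

lemma shuffle_ext {P q : ℕ} (hq : P + q ≤ n) {s t : Equiv.Perm (Fin n)}
    (hs : IsShuffleOn 0 P q s) (ht : IsShuffleOn 0 P q t)
    (h : ∀ a : Fin n, P ≤ (a:ℕ) → s.symm a = t.symm a) : s = t := by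
  have hPn : P ≤ n := by omega
  set f : Fin P → Fin n := fun x => s.symm (Fin.castLE hPn x) with hf
  set g : Fin P → Fin n := fun x => t.symm (Fin.castLE hPn x) with hg
  have hfm : StrictMono f := by
    intro x y hxy
    exact hs.2.1 _ _ (by exact hxy) (Nat.zero_le _)
      (by simp only [Fin.coe_castLE]; omega)
  have hgm : StrictMono g := by
    intro x y hxy
    exact ht.2.1 _ _ (by exact hxy) (Nat.zero_le _)
      (by simp only [Fin.coe_castLE]; omega)
  have hrf : ∀ (u : Equiv.Perm (Fin n)), Set.range (fun x : Fin P => u.symm (Fin.castLE hPn x))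
      = {y : Fin n | (u y : ℕ) < P} := by
    intro u
    ext y
    constructor
    · rintro ⟨x, rfl⟩
      simp only [Set.mem_setOf_eq, Equiv.apply_symm_apply]
      exact x.isLt
    · intro hy
      refine ⟨⟨(u y : ℕ), hy⟩, ?_⟩
      show u.symm (Fin.castLE hPn ⟨(u y : ℕ), hy⟩) = y
      have : Fin.castLE hPn ⟨(u y : ℕ), hy⟩ = u y := by ext; rfl
      rw [this]
      exact u.symm_apply_apply y
  have hiff : ∀ y : Fin n, (s y : ℕ) < P ↔ (t y : ℕ) < P := by
    intro y
    constructor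
    · intro h1
      by_contra h2
      push_neg at h2
      have h3 : s.symm (t y) = t.symm (t y) := h (t y) h2
      rw [t.symm_apply_apply] at h3
      have h4 := congrArg s h3
      rw [Equiv.apply_symm_apply] at h4
      omega
    · intro h1
      by_contra h2
      push_neg at h2
      have h3 : s.symm (s y) = t.symm (s y) := h (s y) h2
      rw [s.symm_apply_apply] at h3
      have h4 := congrArg t h3
      rw [Equiv.apply_symm_apply] at h4
      omega
  have hrange : Set.range f = Set.range g := by
    rw [hf, hg, hrf s, hrf t]
    ext y
    exact hiff y
  haveI : WellFoundedLT (Fin P) := Finite.to_wellFoundedLT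
  have hfg : f = g := (StrictMono.range_inj hfm hgm).mp hrange
  have hsymm : ∀ a : Fin n, s.symm a = t.symm a := by
    intro a
    by_cases ha : (a:ℕ) < P
    · have : Fin.castLE hPn ⟨(a:ℕ), ha⟩ = a := by ext; rfl
      have h5 := congrFun hfg ⟨(a:ℕ), ha⟩
      exact h5
    · exact h a (by omega)
  have : s.symm = t.symm := Equiv.ext hsymm
  calc s = s.symm.symm := rfl
    _ = t.symm.symm := by rw [this]
    _ = t := rfl

lemma exists_shuffle {P q : ℕ} (hq : P + q ≤ n) (τ : Equiv.Perm (Fin n))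
    (hτfix : ∀ a : Fin n, P + q ≤ (a:ℕ) → τ a = a)
    (hτmono : ∀ a b : Fin n, a < b → P ≤ (a:ℕ) → (b:ℕ) < P + q → τ a < τ b) :
    ∃ s : Equiv.Perm (Fin n), IsShuffleOn 0 P q s ∧
      (∀ a : Fin n, P ≤ (a:ℕ) → (a:ℕ) < P + q → s.symm a = τ a) ∧
      (∀ a : Fin n, (a:ℕ) < P → (s (τ a) : ℕ) < P) ∧
      (∀ a b : Fin n, (a:ℕ) < P → (b:ℕ) < P → τ a < τ b → s (τ a) < s (τ b)) := by
  have hPn : P ≤ n := by omega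
  -- τ maps [0, P+q) into [0, P+q)
  have hτlt : ∀ a : Fin n, (a:ℕ) < P + q → (τ a : ℕ) < P + q := by
    intro a ha
    by_contra hge
    push_neg at hge
    have h1 : τ (τ a) = τ a := hτfix (τ a) hge
    have h2 : τ a = a := τ.injective h1
    omega
  -- the finset of values of τ on [0, P)
  set Lo : Finset (Fin n) := Finset.univ.map (Fin.castLEEmb hPn) with hLo
  have memLo : ∀ x : Fin n, x ∈ Lo ↔ (x:ℕ) < P := by
    intro x
    constructor
    · rintro hx
      rw [hLo, Finset.mem_map] at hx
      obtain ⟨y, -, rfl⟩ := hx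
      exact y.isLt
    · intro hx
      rw [hLo, Finset.mem_map]
      exact ⟨⟨(x:ℕ), hx⟩, Finset.mem_univ _, by ext; rfl⟩
  have cardLo : Lo.card = P := by
    rw [hLo, Finset.card_map, Finset.card_univ, Fintype.card_fin]
  set C : Finset (Fin n) := Lo.image τ with hC
  have cardC : C.card = P := by
    rw [hC, Finset.card_image_of_injective _ τ.injective, cardLo]
  have memC : ∀ x : Fin n, x ∈ C ↔ ∃ a : Fin n, (a:ℕ) < P ∧ τ a = x := by
    intro x
    rw [hC, Finset.mem_image]
    constructor
    · rintro ⟨a, ha, rfl⟩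
      exact ⟨a, (memLo a).mp ha, rfl⟩
    · rintro ⟨a, ha, rfl⟩
      exact ⟨a, (memLo a).mpr ha, rfl⟩
  have hClt : ∀ x : Fin n, x ∈ C → (x:ℕ) < P + q := by
    intro x hx
    obtain ⟨a, ha, rfl⟩ := (memC x).mp hx
    exact hτlt a (by omega)
  have hmidC : ∀ x : Fin n, P ≤ (x:ℕ) → (x:ℕ) < P + q → τ x ∉ C := by
    intro x hx1 hx2 hx3
    obtain ⟨a, ha, hae⟩ := (memC _).mp hx3
    have : a = x := τ.injective hae
    omega
  set e := C.orderIsoOfFin cardC with he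
  set v : Fin n → Fin n := fun x =>
    if h : (x:ℕ) < P then (e ⟨(x:ℕ), h⟩ : Fin n)
    else if (x:ℕ) < P + q then τ x else x with hv
  have hv_lo : ∀ (x : Fin n) (h : (x:ℕ) < P), v x = (e ⟨(x:ℕ), h⟩ : Fin n) := by
    intro x h
    rw [hv]
    simp only [dif_pos h]
  have hv_loC : ∀ (x : Fin n), (x:ℕ) < P → v x ∈ C := by
    intro x h
    rw [hv_lo x h]
    exact (e ⟨(x:ℕ), h⟩).2
  have hv_mid : ∀ (x : Fin n), P ≤ (x:ℕ) → (x:ℕ) < P + q → v x = τ x := by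
    intro x h1 h2
    rw [hv]
    simp only [dif_neg (by omega : ¬ (x:ℕ) < P), if_pos h2]
  have hv_hi : ∀ (x : Fin n), P + q ≤ (x:ℕ) → v x = x := by
    intro x h1
    rw [hv]
    simp only [dif_neg (by omega : ¬ (x:ℕ) < P), if_neg (by omega : ¬ (x:ℕ) < P + q)]
  have hinj : Function.Injective v := by
    intro x y hxy
    by_cases hx : (x:ℕ) < P
    · by_cases hy : (y:ℕ) < P
      · rw [hv_lo x hx, hv_lo y hy] at hxy
        have := e.injective (Subtype.coe_injective hxy)
        have := congrArg Fin.val this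
        ext
        exact this
      · by_cases hy2 : (y:ℕ) < P + q
        · rw [hv_lo x hx, hv_mid y (by omega) hy2] at hxy
          exact absurd ((memC _).mp (hxy ▸ (e ⟨(x:ℕ), hx⟩).2)) (by
            rintro ⟨a, ha, hae⟩
            have : a = y := τ.injective hae
            omega)
        · rw [hv_lo x hx, hv_hi y (by omega)] at hxy
          have := hClt _ (hxy ▸ (e ⟨(x:ℕ), hx⟩).2)
          omega
    · by_cases hx2 : (x:ℕ) < P + q
      · by_cases hy : (y:ℕ) < P
        · rw [hv_mid x (by omega) hx2, hv_lo y hy] at hxy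
          exact absurd ((memC _).mp (hxy ▸ (e ⟨(y:ℕ), hy⟩).2)) (by
            rintro ⟨a, ha, hae⟩
            have : a = x := τ.injective hae
            omega)
        · by_cases hy2 : (y:ℕ) < P + q
          · rw [hv_mid x (by omega) hx2, hv_mid y (by omega) hy2] at hxy
            exact τ.injective hxy
          · rw [hv_mid x (by omega) hx2, hv_hi y (by omega)] at hxy
            have := hτlt x (by omega)
            rw [hxy] at this
            omega
      · by_cases hy : (y:ℕ) < P
        · rw [hv_hi x (by omega), hv_lo y hy] at hxy
          have := hClt _ ((hxy.symm) ▸ (e ⟨(y:ℕ), hy⟩).2)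
          omega
        · by_cases hy2 : (y:ℕ) < P + q
          · rw [hv_hi x (by omega), hv_mid y (by omega) hy2] at hxy
            have := hτlt y (by omega)
            rw [← hxy] at this
            omega
          · rw [hv_hi x (by omega), hv_hi y (by omega)] at hxy
            exact hxy
  set s : Equiv.Perm (Fin n) := (Equiv.ofBijective v (Finite.injective_iff_bijective.mp hinj)).symm
    with hs
  have hssymm : ∀ x : Fin n, s.symm x = v x := fun x => rfl
  have hsv : ∀ x : Fin n, s (v x) = x := by
    intro x
    have : v x = s.symm x := (hssymm x).symm
    rw [this]
    exact s.apply_symm_apply x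
  -- s maps C into [0, P)
  have hsC : ∀ x : Fin n, x ∈ C → (s x : ℕ) < P := by
    intro x hx
    by_contra hge
    push_neg at hge
    have h1 : v (s x) = x := by
      have := hssymm (s x)
      rw [← this]
      exact s.symm_apply_apply x
    by_cases h2 : (s x : ℕ) < P + q
    · rw [hv_mid _ hge h2] at h1
      refine hmidC (s x) hge h2 ?_
      rw [h1]
      exact hx
    · rw [hv_hi _ (by omega)] at h1
      have := hClt x hx
      rw [← h1] at this
      omega
  -- the shuffle property
  have hshuf : IsShuffleOn 0 P q s := by
    refine ⟨?_, ?_, ?_⟩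
    · intro a ha
      rcases ha with ha | ha
      · omega
      · have h1 : v a = a := hv_hi a (by omega)
        conv_lhs => rw [← h1]
      
        exact hsv a
    · intro a b hab ha hb
      rw [hssymm, hssymm, hv_lo a (by omega), hv_lo b (by omega)]
      have h1 : (⟨(a:ℕ), by omega⟩ : Fin P) < ⟨(b:ℕ), by omega⟩ := hab
      have := e.strictMono h1
      exact this
    · intro a b hab ha hb
      rw [hssymm, hssymm, hv_mid a (by omega) (by omega), hv_mid b (by omega) (by omega)]
      exact hτmono a b hab (by omega) (by omega)
  refine ⟨s, hshuf, ?_, ?_, ?_⟩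
  · intro a h1 h2
    rw [hssymm, hv_mid a h1 h2]
  · intro a ha
    exact hsC (τ a) ((memC _).mpr ⟨a, ha, rfl⟩)
  · intro a b ha hb hab
    have h1 : (s (τ a) : ℕ) < P := hsC (τ a) ((memC _).mpr ⟨a, ha, rfl⟩)
    have h2 : (s (τ b) : ℕ) < P := hsC (τ b) ((memC _).mpr ⟨b, hb, rfl⟩)
    rcases lt_trichotomy (s (τ a)) (s (τ b)) with h | h | h
    · exact h
    · exact absurd (s.injective h) (ne_of_lt hab)
    · have := hshuf.2.1 _ _ h (Nat.zero_le _) (by omega)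
      rw [s.symm_apply_apply, s.symm_apply_apply] at this
      exact absurd hab (not_lt.mpr (le_of_lt this))



variable {n : ℕ}


/-- consecutive non-descent gives strict increase -/
lemma consec {σ : Equiv.Perm (Fin n)} {j : ℕ} (h1 : 1 ≤ j) (h2 : j < n)
    (hj : j ∉ Descents σ) : σ.symm ⟨j - 1, by omega⟩ < σ.symm ⟨j, h2⟩ := by
  have hne : σ.symm ⟨j - 1, by omega⟩ ≠ σ.symm ⟨j, h2⟩ := by
    intro h
    have := σ.symm.injective h
    have : j - 1 = j := congrArg Fin.val this
    omega
  have hle : ¬ (σ.symm ⟨j - 1, by omega⟩ > σ.symm ⟨j, h2⟩) := fun hgt => hj ⟨h1, h2, hgt⟩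
  rcases lt_or_eq_of_le (not_lt.mp hle) with h | h
  · exact h
  · exact absurd h hne

/-- chain of non-descents gives strict increase -/
lemma mono_of_no_descents {σ : Equiv.Perm (Fin n)} :
    ∀ (d : ℕ) (a b : Fin n), (b:ℕ) = (a:ℕ) + d + 1 →
      (∀ j : ℕ, (a:ℕ) < j → j ≤ (b:ℕ) → j ∉ Descents σ) → σ.symm a < σ.symm b := by
  intro d
  induction d with
  | zero =>
    intro a b hb h
    have h1 : σ.symm ⟨(b:ℕ) - 1, by omega⟩ < σ.symm b :=
      consec (by omega) b.isLt (h _ (by omega) (le_refl _))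
    have ha : (⟨(b:ℕ) - 1, by omega⟩ : Fin n) = a := Fin.ext (show (b:ℕ) - 1 = (a:ℕ) by omega)
    rwa [ha] at h1
  | succ d ih =>
    intro a b hb h
    have hbn : (b:ℕ) - 1 < n := by omega
    have h1 : σ.symm a < σ.symm ⟨(b:ℕ) - 1, hbn⟩ := by
      apply ih a ⟨(b:ℕ) - 1, hbn⟩ (by simp only [Fin.val_mk]; omega)
      intro j hj1 hj2
      simp only [Fin.val_mk] at hj2
      exact h j hj1 (by omega)
    have h2 : σ.symm ⟨(b:ℕ) - 1, hbn⟩ < σ.symm b :=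
      consec (by omega) b.isLt (h _ (by omega) (le_refl _))
    exact lt_trans h1 h2

lemma mono_of_no_descents' {σ : Equiv.Perm (Fin n)} (a b : Fin n) (hab : a < b)
    (h : ∀ j : ℕ, (a:ℕ) < j → j ≤ (b:ℕ) → j ∉ Descents σ) : σ.symm a < σ.symm b := by
  have hab' : (a:ℕ) < (b:ℕ) := hab
  have : (b:ℕ) = (a:ℕ) + ((b:ℕ) - (a:ℕ) - 1) + 1 := by omega
  exact mono_of_no_descents _ a b this h


lemma lt_of_fix {P : ℕ} {u : Equiv.Perm (Fin n)} (h : ∀ a : Fin n, P ≤ (a:ℕ) → u a = a)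
    (x : Fin n) (hx : (x:ℕ) < P) : (u x : ℕ) < P := by
  by_contra hge
  push_neg at hge
  have h1 : u (u x) = u x := h (u x) hge
  have h2 : u x = x := u.injective h1
  omega

lemma step_mul_mem {P q : ℕ} {I : Set ℕ} (hq : P + q ≤ n) {σ' s : Equiv.Perm (Fin n)}
    (hfix' : ∀ a : Fin n, P ≤ (a:ℕ) → σ' a = a) (hdes' : Descents σ' ⊆ I)
    (hs : IsShuffleOn 0 P q s) :
    (∀ a : Fin n, P + q ≤ (a:ℕ) → (σ' * s) a = a) ∧ Descents (σ' * s) ⊆ I ∪ {P} := by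
  constructor
  · intro a ha
    show σ' (s a) = a
    rw [shuffle_fix hs a ha]
    exact hfix' a (by omega)
  · intro i hi
    obtain ⟨h1, h2, h3⟩ := hi
    by_contra hiI
    have hiI1 : i ∉ I := fun h => hiI (Or.inl h)
    have hiP : i ≠ P := fun h => hiI (Or.inr h)
    have hτ : ∀ x : Fin n, (σ' * s).symm x = s.symm (σ'.symm x) := fun x => rfl
    have key : (σ' * s).symm ⟨i - 1, by omega⟩ < (σ' * s).symm ⟨i, h2⟩ := by
      by_cases hc : i < P
      · have hnd : i ∉ Descents σ' := fun h => hiI1 (hdes' h)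
        have hm : σ'.symm ⟨i - 1, by omega⟩ < σ'.symm ⟨i, h2⟩ := consec h1 h2 hnd
        rw [hτ ⟨i - 1, by omega⟩, hτ ⟨i, h2⟩]
        apply hs.2.1 _ _ hm (Nat.zero_le _)
        have hlt := lt_of_fix (fun a ha => symm_fix hfix' a ha) ⟨i, h2⟩ (by
          simp only [Fin.val_mk]; omega)
        omega
      · have hPi : P < i := by omega
        have e1 : σ'.symm ⟨i, h2⟩ = ⟨i, h2⟩ := symm_fix hfix' _ (by
          simp only [Fin.val_mk]; omega)
        have e0 : σ'.symm ⟨i - 1, by omega⟩ = ⟨i - 1, by omega⟩ := symm_fix hfix' _ (by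
          simp only [Fin.val_mk]; omega)
        rw [hτ ⟨i - 1, by omega⟩, hτ ⟨i, h2⟩, e0, e1]
        by_cases hc3 : i < P + q
        · exact hs.2.2 _ _ (Fin.mk_lt_mk.mpr (by omega))
            (by simp only [Fin.val_mk]; omega) (by simp only [Fin.val_mk]; omega)
        · have e2 : s.symm ⟨i, h2⟩ = ⟨i, h2⟩ := shuffle_symm_fix hs _ (by
            simp only [Fin.val_mk]; omega)
          rw [e2]
          by_cases hc4 : i - 1 < P + q
          · have := lt_of_fix (P := P + q) (fun a ha => shuffle_symm_fix hs a ha)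
              ⟨i - 1, by omega⟩ (by simp only [Fin.val_mk]; omega)
            exact Fin.lt_def.mpr (by simp only [Fin.val_mk]; omega)
          · have e3 : s.symm ⟨i - 1, by omega⟩ = ⟨i - 1, by omega⟩ := shuffle_symm_fix hs _ (by
              simp only [Fin.val_mk]; omega)
            rw [e3]
            exact Fin.mk_lt_mk.mpr (by omega)
    exact absurd h3 (not_lt.mpr (le_of_lt key))

lemma step_surj {P q : ℕ} {I : Set ℕ} (hq : P + q ≤ n) (hI : ∀ i ∈ I, i < P)
    {σ : Equiv.Perm (Fin n)} (hfix : ∀ a : Fin n, P + q ≤ (a:ℕ) → σ a = a)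
    (hdes : Descents σ ⊆ I ∪ {P}) :
    ∃ σ' s : Equiv.Perm (Fin n), IsShuffleOn 0 P q s ∧
      (∀ a : Fin n, P ≤ (a:ℕ) → σ' a = a) ∧ Descents σ' ⊆ I ∧ σ = σ' * s := by
  set τ := σ.symm with hτdef
  have hτfix : ∀ a : Fin n, P + q ≤ (a:ℕ) → τ a = a := fun a ha => symm_fix hfix a ha
  have hτmono : ∀ a b : Fin n, a < b → P ≤ (a:ℕ) → (b:ℕ) < P + q → τ a < τ b := by
    intro a b hab ha hb
    apply mono_of_no_descents' a b hab
    intro j hj1 hj2 hjD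
    rcases hdes hjD with h | h
    · exact absurd (hI j h) (by omega)
    · rw [Set.mem_singleton_iff] at h
      omega
  obtain ⟨s, hs, hs1, hs2, hs3⟩ := exists_shuffle hq τ hτfix hτmono
  have hfix' : ∀ a : Fin n, P ≤ (a:ℕ) → (σ * s⁻¹) a = a := by
    intro a ha
    show σ (s.symm a) = a
    by_cases h2 : (a:ℕ) < P + q
    · rw [hs1 a ha h2]
      exact σ.apply_symm_apply a
    · rw [shuffle_symm_fix hs a (by omega)]
      exact hfix a (by omega)
  have hτ' : ∀ x : Fin n, (σ * s⁻¹).symm x = s (τ x) := fun x => rfl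
  have hdes' : Descents (σ * s⁻¹) ⊆ I := by
    intro i hi
    obtain ⟨h1, h2, h3⟩ := hi
    by_contra hiI
    have key : (σ * s⁻¹).symm ⟨i - 1, by omega⟩ < (σ * s⁻¹).symm ⟨i, h2⟩ := by
      by_cases hc : i < P
      · have hnd : i ∉ Descents σ := by
          intro h
          rcases hdes h with h' | h'
          · exact hiI h'
          · rw [Set.mem_singleton_iff] at h'
            omega
        have hm : τ ⟨i - 1, by omega⟩ < τ ⟨i, h2⟩ := consec h1 h2 hnd
        rw [hτ' ⟨i - 1, by omega⟩, hτ' ⟨i, h2⟩]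
        exact hs3 _ _ (by simp only [Fin.val_mk]; omega) (by simp only [Fin.val_mk]; omega) hm
      · have e1 : (σ * s⁻¹).symm ⟨i, h2⟩ = ⟨i, h2⟩ := symm_fix hfix' _ (by
          simp only [Fin.val_mk]; omega)
        rw [e1]
        by_cases hc2 : i = P
        · rw [hτ' ⟨i - 1, by omega⟩]
          have := hs2 ⟨i - 1, by omega⟩ (by simp only [Fin.val_mk]; omega)
          exact Fin.lt_def.mpr (by simp only [Fin.val_mk]; omega)
        · have e0 : (σ * s⁻¹).symm ⟨i - 1, by omega⟩ = ⟨i - 1, by omega⟩ :=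
            symm_fix hfix' _ (by simp only [Fin.val_mk]; omega)
          rw [e0]
          exact Fin.mk_lt_mk.mpr (by omega)
    exact absurd h3 (not_lt.mpr (le_of_lt key))
  exact ⟨σ * s⁻¹, s, hs, hfix', hdes', by group⟩

lemma step_inj {P q : ℕ} (hq : P + q ≤ n) {σ1 σ2 s1 s2 : Equiv.Perm (Fin n)}
    (h1 : ∀ a : Fin n, P ≤ (a:ℕ) → σ1 a = a) (h2 : ∀ a : Fin n, P ≤ (a:ℕ) → σ2 a = a)
    (hs1 : IsShuffleOn 0 P q s1) (hs2 : IsShuffleOn 0 P q s2)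
    (heq : σ1 * s1 = σ2 * s2) : σ1 = σ2 ∧ s1 = s2 := by
  have hssym : ∀ a : Fin n, P ≤ (a:ℕ) → s1.symm a = s2.symm a := by
    intro a ha
    calc s1.symm a = s1.symm (σ1.symm a) := by rw [symm_fix h1 a ha]
      _ = (σ1 * s1).symm a := rfl
      _ = (σ2 * s2).symm a := by rw [heq]
      _ = s2.symm (σ2.symm a) := rfl
      _ = s2.symm a := by rw [symm_fix h2 a ha]
  have hss : s1 = s2 := shuffle_ext hq hs1 hs2 hssym
  subst hss
  exact ⟨mul_right_cancel heq, rfl⟩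

lemma partialSum_succ (c : ℕ → ℕ) (m : ℕ) : partialSum c (m + 1) = partialSum c m + c m :=
  Finset.sum_range_succ c m

lemma partialSum_mono (c : ℕ → ℕ) {m m' : ℕ} (h : m ≤ m') : partialSum c m ≤ partialSum c m' :=
  Finset.sum_le_sum_of_subset (Finset.range_subset_range.mpr h)

lemma partialSum_lt (c : ℕ → ℕ) {l k : ℕ} (h0 : 0 < c l) (hl : l ≤ k) :
    partialSum c l < partialSum c (k + 1) := by
  calc partialSum c l < partialSum c (l + 1) := by rw [partialSum_succ]; omega
    _ ≤ partialSum c (k + 1) := partialSum_mono c (by omega)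

lemma image_Icc_succ (c : ℕ → ℕ) (k : ℕ) :
    partialSum c '' Set.Icc 1 (k + 1) = (partialSum c '' Set.Icc 1 k) ∪ {partialSum c (k + 1)} := by
  have h : Set.Icc 1 (k + 1) = Set.Icc 1 k ∪ {k + 1} := by
    ext x
    simp only [Set.mem_Icc, Set.mem_union, Set.mem_singleton_iff]
    omega
  rw [h, Set.image_union, Set.image_singleton]

lemma descents_one : Descents (1 : Equiv.Perm (Fin n)) = ∅ := by
  ext i
  simp only [Set.mem_empty_iff_false, iff_false]
  rintro ⟨h1, h2, h3⟩
  have : ((⟨i, h2⟩ : Fin n) : ℕ) < ((⟨i - 1, by omega⟩ : Fin n) : ℕ) := h3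
  simp only [Fin.val_mk] at this
  omega

lemma eq_one_of_descents_empty {σ : Equiv.Perm (Fin n)} (h : Descents σ ⊆ ∅) : σ = 1 := by
  have hmono : StrictMono (⇑σ.symm) := by
    intro a b hab
    exact mono_of_no_descents' a b hab (fun j _ _ hj => absurd (h hj) (Set.notMem_empty j))
  haveI : WellFoundedLT (Fin n) := Finite.to_wellFoundedLT
  have hid : StrictMono (id : Fin n → Fin n) := strictMono_id
  have hrange : Set.range (⇑σ.symm) = Set.range (id : Fin n → Fin n) := by
    rw [Set.range_id, Set.range_eq_univ]
    exact σ.symm.surjective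
  have heq : (⇑σ.symm) = id := (StrictMono.range_inj hmono hid).mp hrange
  have : σ.symm = 1 := Equiv.ext (fun a => congrFun heq a)
  calc σ = σ.symm.symm := rfl
    _ = (1 : Equiv.Perm (Fin n)).symm := by rw [this]
    _ = 1 := rfl

lemma gen (k : ℕ) (c : ℕ → ℕ) : (∀ l ≤ k, 0 < c l) → partialSum c (k + 1) ≤ n →
    Function.Injective
      (fun f : ∀ l : Fin k, {σ : Equiv.Perm (Fin n) //
            IsShuffleOn 0 (partialSum c ((l : ℕ) + 1)) (c ((l : ℕ) + 1)) σ} =>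
        (List.ofFn fun l => (f l).1).prod) ∧
    Set.range
      (fun f : ∀ l : Fin k, {σ : Equiv.Perm (Fin n) //
            IsShuffleOn 0 (partialSum c ((l : ℕ) + 1)) (c ((l : ℕ) + 1)) σ} =>
        (List.ofFn fun l => (f l).1).prod) =
      {σ : Equiv.Perm (Fin n) | (∀ a : Fin n, partialSum c (k + 1) ≤ (a:ℕ) → σ a = a) ∧
        Descents σ ⊆ partialSum c '' Set.Icc 1 k} := by
  induction k with
  | zero =>
    intro hc hle
    constructor
    · intro f g _
      funext l
      exact l.elim0
    · ext σ
      simp only [Set.mem_range, Set.mem_setOf_eq]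
      constructor
      · rintro ⟨f, rfl⟩
        have hone : (List.ofFn fun l : Fin 0 => (f l).1).prod = 1 := by
          simp [List.ofFn_zero]
        rw [hone]
        refine ⟨fun a _ => rfl, ?_⟩
        rw [descents_one]
        exact Set.empty_subset _
      · rintro ⟨hfix, hdes⟩
        have hIcc : Set.Icc (1:ℕ) 0 = ∅ := Set.Icc_eq_empty (by omega)
        rw [hIcc, Set.image_empty] at hdes
        have : σ = 1 := eq_one_of_descents_empty hdes
        refine ⟨fun l => l.elim0, ?_⟩
        simp [List.ofFn_zero, this]
  | succ k ih =>
    intro hc hle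
    have hc' : ∀ l ≤ k, 0 < c l := fun l hl => hc l (by omega)
    have hle' : partialSum c (k + 1) ≤ n :=
      le_trans (partialSum_mono c (by omega)) hle
    obtain ⟨ihinj, ihrange⟩ := ih hc' hle'
    set P := partialSum c (k + 1) with hP
    set q := c (k + 1) with hq'
    have hPq : P + q ≤ n := by
      rw [hP, hq', ← partialSum_succ]
      exact hle
    have hI : ∀ i ∈ partialSum c '' Set.Icc 1 k, i < P := by
      rintro i ⟨l, ⟨hl1, hl2⟩, rfl⟩
      exact partialSum_lt c (hc l (by omega)) hl2
    have hdecomp : ∀ f : (∀ l : Fin (k+1), {σ : Equiv.Perm (Fin n) //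
          IsShuffleOn 0 (partialSum c ((l : ℕ) + 1)) (c ((l : ℕ) + 1)) σ}),
        (List.ofFn fun l => (f l).1).prod
          = (List.ofFn fun l : Fin k => (f l.castSucc).1).prod * (f (Fin.last k)).1 := by
      intro f
      rw [List.ofFn_succ', List.prod_concat]
    constructor
    · intro f g heq
      simp only at heq
      rw [hdecomp f, hdecomp g] at heq
      have hmemf := (Set.ext_iff.mp ihrange ((List.ofFn fun l : Fin k =>
        (f l.castSucc).1).prod)).mp ⟨fun l => f l.castSucc, rfl⟩
      have hmemg := (Set.ext_iff.mp ihrange ((List.ofFn fun l : Fin k =>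
        (g l.castSucc).1).prod)).mp ⟨fun l => g l.castSucc, rfl⟩
      obtain ⟨hfixf, -⟩ := hmemf
      obtain ⟨hfixg, -⟩ := hmemg
      have hstep := step_inj hPq hfixf hfixg (f (Fin.last k)).2 (g (Fin.last k)).2 heq
      have hcast : (fun l : Fin k => f l.castSucc) = (fun l : Fin k => g l.castSucc) :=
        ihinj hstep.1
      funext l
      induction l using Fin.lastCases with
      | last => exact Subtype.ext hstep.2
      | cast i => exact congrFun hcast i
    · ext σ
      simp only [Set.mem_range, Set.mem_setOf_eq]
      constructor
      · rintro ⟨f, rfl⟩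
        rw [hdecomp f]
        have hmemf := (Set.ext_iff.mp ihrange ((List.ofFn fun l : Fin k =>
          (f l.castSucc).1).prod)).mp ⟨fun l => f l.castSucc, rfl⟩
        obtain ⟨hfixf, hdesf⟩ := hmemf
        have := step_mul_mem hPq hfixf hdesf (f (Fin.last k)).2
        refine ⟨?_, ?_⟩
        · intro a ha
          apply this.1 a
          rw [partialSum_succ] at ha
          omega
        · rw [image_Icc_succ]
          exact this.2
      · rintro ⟨hfix, hdes⟩
        have hfix' : ∀ a : Fin n, P + q ≤ (a:ℕ) → σ a = a := by
          intro a ha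
          apply hfix a
          rw [partialSum_succ]
          omega
        have hdes' : Descents σ ⊆ (partialSum c '' Set.Icc 1 k) ∪ {P} := by
          rw [image_Icc_succ] at hdes
          exact hdes
        obtain ⟨σ', s, hs, hfixσ', hdesσ', hmul⟩ := step_surj hPq hI hfix' hdes'
        have hmem : σ' ∈ Set.range
            (fun f : ∀ l : Fin k, {σ : Equiv.Perm (Fin n) //
                IsShuffleOn 0 (partialSum c ((l : ℕ) + 1)) (c ((l : ℕ) + 1)) σ} =>
              (List.ofFn fun l => (f l).1).prod) := by
          rw [ihrange]
          exact ⟨hfixσ', hdesσ'⟩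
        obtain ⟨f₀, hf₀⟩ := hmem
        refine ⟨fun l => Fin.lastCases (motive := fun l : Fin (k+1) =>
          {σ : Equiv.Perm (Fin n) //
            IsShuffleOn 0 (partialSum c ((l : ℕ) + 1)) (c ((l : ℕ) + 1)) σ})
          ⟨s, hs⟩ f₀ l, ?_⟩
        beta_reduce
        rw [hdecomp]
        have h1 : (Fin.lastCases (motive := fun l : Fin (k+1) => {σ : Equiv.Perm (Fin n) //
            IsShuffleOn 0 (partialSum c ((l : ℕ) + 1)) (c ((l : ℕ) + 1)) σ})
            ⟨s, hs⟩ f₀ (Fin.last k)).1 = s := by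
          rw [Fin.lastCases_last]
        have h2 : (List.ofFn fun l : Fin k => (Fin.lastCases (motive := fun l : Fin (k+1) =>
            {σ : Equiv.Perm (Fin n) //
            IsShuffleOn 0 (partialSum c ((l : ℕ) + 1)) (c ((l : ℕ) + 1)) σ})
            ⟨s, hs⟩ f₀ l.castSucc).1) = List.ofFn fun l : Fin k => (f₀ l).1 :=
          congrArg List.ofFn (funext fun i => by rw [Fin.lastCases_castSucc])
        rw [h1, h2]
        have hf₀' : (List.ofFn fun l : Fin k => (f₀ l).1).prod = σ' := hf₀
        rw [hf₀', hmul]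

end DD

/-- let `I = {i₁ < ⋯ < i_k} ⊆ {1,…,n-1}` correspond to the composition
`c = (c₁,…,c_{k+1})` of `n` with `c₁ + ⋯ + c_l = i_l`.  The multiplication map
`S_{c₁+⋯+c_k, c_{k+1}} × ⋯ × S_{c₁,c₂} → S_n`, `(σ^k,…,σ^1) ↦ σ^k ⋯ σ^1`
(factor `l` embedded acting on the first `c₁+⋯+c_{l+1}` letters) is a bijection onto
`{σ ∈ S_n | des(σ) ⊆ I}`.  (Permutations are composed in the paper's left-to-right
convention, so the paper's descending product `σ^k ⋯ σ^1` is
`σ^1 * σ^2 * ⋯ * σ^k` in terms of Lean's right-to-left composition `*`.)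
Here the factor for `l : Fin k` is
`S_{partialSum c (l+1), c (l+1)}`, and `I = partialSum c '' {1,…,k}`. -/
theorem descent_decomposition (n k : ℕ) (c : ℕ → ℕ) (hc : ∀ l ≤ k, 0 < c l)
    (hsum : ∑ l ∈ Finset.range (k + 1), c l = n) :
    Function.Injective
      (fun f : ∀ l : Fin k, {σ : Equiv.Perm (Fin n) //
            IsShuffleOn 0 (partialSum c ((l : ℕ) + 1)) (c ((l : ℕ) + 1)) σ} =>
        (List.ofFn fun l => (f l).1).prod) ∧
    Set.range
      (fun f : ∀ l : Fin k, {σ : Equiv.Perm (Fin n) //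
            IsShuffleOn 0 (partialSum c ((l : ℕ) + 1)) (c ((l : ℕ) + 1)) σ} =>
        (List.ofFn fun l => (f l).1).prod) =
      {σ : Equiv.Perm (Fin n) | Descents σ ⊆ partialSum c '' Set.Icc 1 k} := by
  have hps : partialSum c (k + 1) = n := hsum
  obtain ⟨hinj, hrange⟩ := DD.gen k c hc (le_of_eq hps)
  refine ⟨hinj, ?_⟩
  rw [hrange]
  ext σ
  simp only [Set.mem_setOf_eq]
  constructor
  · rintro ⟨-, h⟩
    exact h
  · intro h
    refine ⟨?_, h⟩
    intro a ha
    exact absurd a.isLt (by omega)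
end

section
/- The Matsumoto–Tits section is well-defined: for s ∈ S_n, the element σ_{i₁}⋯σ_{i_ℓ} of the positive braid monoid B_n⁺ does not depend on the choice of reduced expression s = s_{i₁}⋯s_{i_ℓ}. -/
/-- `σ` is a simple transposition `s_i = (i, i+1)` of `S_n`. -/
def IsSimpleT {n : ℕ} (σ : Equiv.Perm (Fin n)) : Prop :=
  ∃ i : ℕ, ∃ h : i + 1 < n, σ = Equiv.swap ⟨i, by omega⟩ ⟨i + 1, h⟩

/-- The Coxeter length of `σ ∈ S_n`. -/
noncomputable def permLength {n : ℕ} (σ : Equiv.Perm (Fin n)) : ℕ :=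
  sInf {m | ∃ w : List (Equiv.Perm (Fin n)),
    (∀ x ∈ w, IsSimpleT x) ∧ w.prod = σ ∧ w.length = m}

/-- The `i`-th simple transposition of `S_n`, for `i : Fin (n-1)` (0-based). -/
def simpleT (n : ℕ) (i : Fin (n - 1)) : Equiv.Perm (Fin n) :=
  Equiv.swap ⟨(i : ℕ), by have := i.isLt; omega⟩ ⟨(i : ℕ) + 1, by have := i.isLt; omega⟩

/-- The monoid homomorphism sending a word in the generators `σ_1,…,σ_{n-1}` to the
corresponding product of simple transpositions of `S_n`. -/
def wordPerm (n : ℕ) : FreeMonoid (Fin (n - 1)) →* Equiv.Perm (Fin n) :=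
  FreeMonoid.lift (simpleT n)

/-- The braid relations on words in the generators `σ_1,…,σ_{n-1}`:
`σ_i σ_j = σ_j σ_i` for `|i-j| > 1`, and `σ_i σ_{i+1} σ_i = σ_{i+1} σ_i σ_{i+1}`. -/
def braidRel (n : ℕ) : FreeMonoid (Fin (n - 1)) → FreeMonoid (Fin (n - 1)) → Prop :=
  fun x y =>
    (∃ i j : Fin (n - 1), (i : ℕ) + 1 < (j : ℕ) ∧
      x = FreeMonoid.of i * FreeMonoid.of j ∧ y = FreeMonoid.of j * FreeMonoid.of i) ∨
    (∃ i j : Fin (n - 1), (j : ℕ) = (i : ℕ) + 1 ∧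
      x = FreeMonoid.of i * FreeMonoid.of j * FreeMonoid.of i ∧
      y = FreeMonoid.of j * FreeMonoid.of i * FreeMonoid.of j)

/-- The congruence on the free monoid generated by the braid relations; the quotient
`(braidCon n).Quotient` is the positive braid monoid `B_n⁺`. -/
def braidCon (n : ℕ) : Con (FreeMonoid (Fin (n - 1))) := conGen (braidRel n)

/-!
Measure the length of `s ∈ S_n` by its number of inversions: right multiplication by a simple
transposition `s_i` changes it by exactly one, downwards iff `i` is a right descent of `s`. Then
induct on the length of `s`. Two reduced words of `s` ending in the same letter agree in `B_n⁺` by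
induction. If they end in different letters `i ≠ j`, both are descents of `s`, so `s` also has
two reduced words with a common prefix, ending in `j i` and `i j` when `|i - j| > 1`, or in
`i j i` and `j i j` when `|i - j| = 1`; a braid relation identifies these two, and the previous
case connects each of them to one of the given words.
-/

lemma FreeMonoid.exists_eq_mul_of_of_length_pos {α : Type*} {w : FreeMonoid α}
    (hw : 0 < w.length) : ∃ u x, w = u * FreeMonoid.of x := by
  rcases List.eq_nil_or_concat w.toList with h | ⟨u, x, h⟩
  · exact absurd h (List.ne_nil_of_length_pos hw)
  · exact ⟨FreeMonoid.ofList u, x, by rwa [List.concat_eq_append] at h⟩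

namespace Matsumoto

open Equiv Finset

section Inversions

variable {α : Type*} [LinearOrder α]

lemma swap_lt_swap_of_covBy {a b x y : α} (hab : a ⋖ b) (hxy : x < y) (hne : (x, y) ≠ (a, b)) :
    swap a b x < swap a b y := by
  have hx : x < b → x ≤ a := hab.le_of_lt
  have hy : a < y → b ≤ y := hab.ge_of_gt
  have := hab.lt
  simp only [ne_eq, Prod.mk.injEq] at hne
  rw [swap_apply_def, swap_apply_def]
  split_ifs <;> grind

variable [Fintype α]

def inversions (s : Perm α) : Finset (α × α) :=
  {p | p.1 < p.2 ∧ s p.2 < s p.1}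

def numInversions (s : Perm α) : ℕ := #(inversions s)

@[simp]
lemma mem_inversions {s : Perm α} {x y : α} :
    (x, y) ∈ inversions s ↔ x < y ∧ s y < s x := by
  simp [inversions]

lemma numInversions_one : numInversions (1 : Perm α) = 0 := by
  simp only [numInversions, inversions, card_eq_zero, filter_eq_empty_iff]
  exact fun _ _ h => h.1.asymm h.2

/-- Away from the pair `(a, b)` itself, right multiplication by `swap a b` just relabels the
inversions, because `a` and `b` are adjacent. -/
lemma card_erase_inversions_mul_swap (s : Perm α) {a b : α} (hab : a ⋖ b) :
    #((inversions (s * swap a b)).erase (a, b)) = #((inversions s).erase (a, b)) := by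
  refine card_equiv ((swap a b).prodCongr (swap a b)) fun ⟨x, y⟩ => ?_
  simp only [mem_erase, mem_inversions, Perm.mul_apply, prodCongr_apply, Prod.map, ne_eq]
  constructor
  · rintro ⟨hne, hxy, hs⟩
    refine ⟨?_, swap_lt_swap_of_covBy hab hxy hne, hs⟩
    have := hab.lt
    grind
  · rintro ⟨hne, hxy, hs⟩
    have := swap_lt_swap_of_covBy hab hxy hne
    simp only [swap_apply_self] at this
    refine ⟨?_, this, hs⟩
    rintro ⟨⟩
    simp [hab.lt.asymm] at hxy

lemma numInversions_mul_swap_of_lt (s : Perm α) {a b : α} (hab : a ⋖ b) (h : s a < s b) :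
    numInversions (s * swap a b) = numInversions s + 1 := by
  have hmem : (a, b) ∈ inversions (s * swap a b) := by simp [hab.lt, h]
  have hnot : (a, b) ∉ inversions s := by simp [h.asymm]
  rw [numInversions, numInversions, ← card_erase_add_one hmem,
    card_erase_inversions_mul_swap s hab, erase_eq_of_notMem hnot]

lemma numInversions_mul_swap_of_gt (s : Perm α) {a b : α} (hab : a ⋖ b) (h : s b < s a) :
    numInversions (s * swap a b) + 1 = numInversions s := by
  simpa [mul_assoc] using (numInversions_mul_swap_of_lt (s * swap a b) hab (by simpa using h)).symm

lemma numInversions_mul_swap_le (s : Perm α) {a b : α} (hab : a ⋖ b) :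
    numInversions (s * swap a b) ≤ numInversions s + 1 := by
  rcases lt_or_gt_of_ne (s.injective.ne hab.ne) with h | h
  · exact (numInversions_mul_swap_of_lt s hab h).le
  · have := numInversions_mul_swap_of_gt s hab h; omega

lemma numInversions_mul_swap_mul_swap (s : Perm α) {a b c d : α} (hab : a ⋖ b) (hbc : b < c)
    (hcd : c ⋖ d) (h₁ : s b < s a) (h₂ : s d < s c) :
    numInversions (s * swap a b * swap c d) + 2 = numInversions s := by
  have hbd := hbc.trans hcd.lt
  have h₂' : (s * swap a b) d < (s * swap a b) c := by
    rwa [Perm.mul_apply, Perm.mul_apply, swap_apply_of_ne_of_ne (hab.lt.trans hbc).ne' hbc.ne',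
      swap_apply_of_ne_of_ne (hab.lt.trans hbd).ne' hbd.ne']
  have := numInversions_mul_swap_of_gt s hab h₁
  have := numInversions_mul_swap_of_gt _ hcd h₂'
  omega

lemma numInversions_mul_swap_mul_swap_mul_swap (s : Perm α) {a b c : α} (hab : a ⋖ b)
    (hbc : b ⋖ c) (h₁ : s b < s a) (h₂ : s c < s b) :
    numInversions (s * swap a b * swap b c * swap a b) + 3 = numInversions s := by
  have hac : a ≠ c := (hab.lt.trans hbc.lt).ne
  have h₂' : (s * swap a b) c < (s * swap a b) b := by
    rw [Perm.mul_apply, Perm.mul_apply, swap_apply_of_ne_of_ne hac.symm hbc.ne', swap_apply_right]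
    exact h₂.trans h₁
  have h₃' : (s * swap a b * swap b c) b < (s * swap a b * swap b c) a := by
    rwa [Perm.mul_apply, Perm.mul_apply, Perm.mul_apply, Perm.mul_apply, swap_apply_left,
      swap_apply_of_ne_of_ne hac.symm hbc.ne', swap_apply_of_ne_of_ne hab.ne hac, swap_apply_left]
  have := numInversions_mul_swap_of_gt s hab h₁
  have := numInversions_mul_swap_of_gt _ hbc h₂'
  have := numInversions_mul_swap_of_gt _ hab h₃'
  omega

end Inversions

section SymmetricGroup

variable {n : ℕ}

def lo (i : Fin (n - 1)) : Fin n := ⟨i, by omega⟩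

def hi (i : Fin (n - 1)) : Fin n := ⟨i + 1, by omega⟩

lemma simpleT_eq_swap (i : Fin (n - 1)) : simpleT n i = swap (lo i) (hi i) := rfl

lemma lo_covBy_hi (i : Fin (n - 1)) : lo i ⋖ hi i := by
  simp [Fin.covBy_iff, lo, hi]

lemma simpleT_mul_self (i : Fin (n - 1)) : simpleT n i * simpleT n i = 1 :=
  swap_mul_self _ _

lemma isSimpleT_simpleT (i : Fin (n - 1)) : IsSimpleT (simpleT n i) :=
  ⟨i, by omega, rfl⟩

lemma numInversions_mul_le_of_isSimpleT (s : Perm (Fin n)) {x : Perm (Fin n)} (hx : IsSimpleT x) :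
    numInversions (s * x) ≤ numInversions s + 1 := by
  obtain ⟨i, hi, rfl⟩ := hx
  exact numInversions_mul_swap_le s (by simp [Fin.covBy_iff])

lemma numInversions_mul_prod_le (s : Perm (Fin n)) (L : List (Perm (Fin n)))
    (hL : ∀ x ∈ L, IsSimpleT x) :
    numInversions (s * L.prod) ≤ numInversions s + L.length := by
  induction L generalizing s with
  | nil => simp
  | cons x L ih =>
    have hx := numInversions_mul_le_of_isSimpleT s (hL x List.mem_cons_self)
    have hL := ih (s * x) fun y hy => hL y (List.mem_cons_of_mem _ hy)
    rw [List.prod_cons, ← mul_assoc, List.length_cons]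
    omega

lemma wordPerm_of (i : Fin (n - 1)) : wordPerm n (FreeMonoid.of i) = simpleT n i := rfl

lemma wordPerm_eq_prod (w : FreeMonoid (Fin (n - 1))) :
    wordPerm n w = (w.toList.map (simpleT n)).prod :=
  FreeMonoid.lift_apply _ _

lemma numInversions_wordPerm_le (w : FreeMonoid (Fin (n - 1))) :
    numInversions (wordPerm n w) ≤ w.length := by
  have := numInversions_mul_prod_le 1 (w.toList.map (simpleT n)) (by simp [isSimpleT_simpleT])
  rw [one_mul, numInversions_one, zero_add, List.length_map] at this
  rwa [wordPerm_eq_prod]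

lemma eq_one_of_forall_not_lt (s : Perm (Fin n)) (hs : ∀ i, ¬ s (hi i) < s (lo i)) : s = 1 := by
  cases n with
  | zero => exact Subsingleton.elim _ _
  | succ m =>
    have hmono : StrictMono s := Fin.strictMono_iff_lt_succ.2 fun i =>
      (not_lt.1 (hs i)).lt_of_ne (s.injective.ne Fin.castSucc_lt_succ.ne)
    exact Equiv.ext (congrFun hmono.eq_id)

def IsReducedWord (s : Perm (Fin n)) (w : FreeMonoid (Fin (n - 1))) : Prop :=
  wordPerm n w = s ∧ w.length = numInversions s

lemma IsReducedWord.mul {s t : Perm (Fin n)} {r p : FreeMonoid (Fin (n - 1))}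
    (hr : IsReducedWord t r) (hs : t * wordPerm n p = s)
    (hlen : numInversions t + p.length = numInversions s) : IsReducedWord s (r * p) :=
  ⟨by rw [map_mul, hr.1, hs], by rw [FreeMonoid.length_mul, hr.2, hlen]⟩

lemma exists_isReducedWord (s : Perm (Fin n)) : ∃ w, IsReducedWord s w := by
  induction hN : numInversions s using Nat.strong_induction_on generalizing s with
  | _ N ih =>
  by_cases hdesc : ∃ i, s (hi i) < s (lo i)
  · obtain ⟨i, hsi⟩ := hdesc
    have hdrop : numInversions (s * simpleT n i) + 1 = N :=
      hN ▸ numInversions_mul_swap_of_gt s (lo_covBy_hi i) hsi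
    obtain ⟨r, hr⟩ := ih _ (by omega) (s * simpleT n i) rfl
    exact ⟨r * FreeMonoid.of i, hr.mul (by rw [wordPerm_of, mul_assoc, simpleT_mul_self, mul_one])
      (by rw [FreeMonoid.length_of]; omega)⟩
  · obtain rfl := eq_one_of_forall_not_lt s (not_exists.1 hdesc)
    exact ⟨1, map_one _, by rw [FreeMonoid.length_one, numInversions_one]⟩

lemma permLength_eq_numInversions (s : Perm (Fin n)) : permLength s = numInversions s := by
  obtain ⟨w, rfl, hw⟩ := exists_isReducedWord s
  have hmem : w.length ∈ {m | ∃ L : List (Perm (Fin n)),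
      (∀ x ∈ L, IsSimpleT x) ∧ L.prod = wordPerm n w ∧ L.length = m} :=
    ⟨w.toList.map (simpleT n), by simp [isSimpleT_simpleT], (wordPerm_eq_prod w).symm,
      by simp; rfl⟩
  refine le_antisymm (hw ▸ Nat.sInf_le hmem) (le_csInf ⟨_, hmem⟩ ?_)
  rintro m ⟨L, hL, hprod, rfl⟩
  simpa [← hprod, numInversions_one] using numInversions_mul_prod_le 1 L hL

lemma IsReducedWord.of_mul_of {s : Perm (Fin n)} {u : FreeMonoid (Fin (n - 1))} {i : Fin (n - 1)}
    (h : IsReducedWord s (u * FreeMonoid.of i)) :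
    IsReducedWord (s * simpleT n i) u ∧ s (hi i) < s (lo i) := by
  obtain ⟨hs, hlen⟩ := h
  have hu : wordPerm n u = s * simpleT n i := by
    rw [← hs, map_mul, wordPerm_of, mul_assoc, simpleT_mul_self, mul_one]
  have hle := numInversions_wordPerm_le u
  have hback :
      numInversions (s * simpleT n i * simpleT n i) ≤ numInversions (s * simpleT n i) + 1 :=
    numInversions_mul_swap_le _ (lo_covBy_hi i)
  rw [FreeMonoid.length_mul, FreeMonoid.length_of] at hlen
  rw [hu] at hle
  rw [mul_assoc, simpleT_mul_self, mul_one] at hback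
  refine ⟨⟨hu, by omega⟩, ?_⟩
  by_contra! hlt
  have : numInversions (s * simpleT n i) = numInversions s + 1 :=
    numInversions_mul_swap_of_lt s (lo_covBy_hi i)
      (hlt.lt_of_ne (s.injective.ne (lo_covBy_hi i).ne))
  omega

lemma simpleT_mul_comm_of_lt {i j : Fin (n - 1)} (h : (i : ℕ) + 1 < j) :
    simpleT n i * simpleT n j = simpleT n j * simpleT n i :=
  (Perm.disjoint_swap_swap (by simp [Fin.ext_iff]; omega)).commute

lemma simpleT_braid {i j : Fin (n - 1)} (h : (j : ℕ) = i + 1) :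
    simpleT n i * simpleT n j * simpleT n i = simpleT n j * simpleT n i * simpleT n j := by
  have hlo : lo j = hi i := Fin.ext h
  have hab : lo i ≠ hi i := (lo_covBy_hi i).ne
  have hac : lo i ≠ hi j := by simp [lo, hi, Fin.ext_iff]; omega
  have hbc : hi i ≠ hi j := by simp [hi, Fin.ext_iff]; omega
  rw [simpleT_eq_swap, simpleT_eq_swap, hlo, swap_mul_swap_mul_swap hab hac,
    swap_comm (lo i) (hi i), swap_comm (hi i) (hi j), swap_mul_swap_mul_swap hbc.symm hac.symm,
    swap_comm]

end SymmetricGroup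

section Braids

variable {n : ℕ}

open FreeMonoid (of)

lemma braidCon_of_mul_of {i j : Fin (n - 1)} (h : (i : ℕ) + 1 < j) :
    braidCon n (of i * of j) (of j * of i) :=
  ConGen.Rel.of _ _ (Or.inl ⟨i, j, h, rfl, rfl⟩)

lemma braidCon_of_mul_of_mul_of {i j : Fin (n - 1)} (h : (j : ℕ) = i + 1) :
    braidCon n (of i * of j * of i) (of j * of i * of j) :=
  ConGen.Rel.of _ _ (Or.inr ⟨i, j, h, rfl, rfl⟩)

lemma exists_braidCon_of_far {s : Perm (Fin n)} {i j : Fin (n - 1)} (h : (i : ℕ) + 1 < j)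
    (hsi : s (hi i) < s (lo i)) (hsj : s (hi j) < s (lo j)) :
    ∃ x y, IsReducedWord s (x * of i) ∧ IsReducedWord s (y * of j) ∧
      braidCon n (x * of i) (y * of j) := by
  have hdrop : numInversions (s * simpleT n i * simpleT n j) + 2 = numInversions s :=
    numInversions_mul_swap_mul_swap s (lo_covBy_hi i) (by simp [Fin.lt_def]; omega)
      (lo_covBy_hi j) hsi hsj
  obtain ⟨r, hr⟩ := exists_isReducedWord (s * simpleT n i * simpleT n j)
  have hji : s * simpleT n i * simpleT n j * wordPerm n (of j * of i) = s := by
    simp [wordPerm_of, simpleT_eq_swap, mul_assoc]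
  have hij : s * simpleT n i * simpleT n j * wordPerm n (of i * of j) = s := by
    rw [map_mul, wordPerm_of, wordPerm_of, simpleT_mul_comm_of_lt h]
    simp [simpleT_eq_swap, mul_assoc]
  refine ⟨r * of j, r * of i, ?_, ?_, ?_⟩
  · rw [mul_assoc]; exact hr.mul hji (by simp; omega)
  · rw [mul_assoc]; exact hr.mul hij (by simp; omega)
  · simpa only [mul_assoc] using (braidCon n).mul ((braidCon n).refl r) (braidCon_of_mul_of h).symm

lemma exists_braidCon_of_adjacent {s : Perm (Fin n)} {i j : Fin (n - 1)} (h : (j : ℕ) = i + 1)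
    (hsi : s (hi i) < s (lo i)) (hsj : s (hi j) < s (lo j)) :
    ∃ x y, IsReducedWord s (x * of i) ∧ IsReducedWord s (y * of j) ∧
      braidCon n (x * of i) (y * of j) := by
  have hlo : lo j = hi i := Fin.ext h
  have hdrop :
      numInversions (s * simpleT n i * simpleT n j * simpleT n i) + 3 = numInversions s := by
    rw [simpleT_eq_swap, simpleT_eq_swap, hlo]
    exact numInversions_mul_swap_mul_swap_mul_swap s (lo_covBy_hi i) (hlo ▸ lo_covBy_hi j) hsi
      (hlo ▸ hsj)
  obtain ⟨r, hr⟩ := exists_isReducedWord (s * simpleT n i * simpleT n j * simpleT n i)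
  have hiji :
      s * simpleT n i * simpleT n j * simpleT n i * wordPerm n (of i * of j * of i) = s := by
    simp [wordPerm_of, simpleT_eq_swap, mul_assoc]
  have hjij :
      s * simpleT n i * simpleT n j * simpleT n i * wordPerm n (of j * of i * of j) = s := by
    rw [map_mul, map_mul, wordPerm_of, wordPerm_of, ← simpleT_braid h]
    simp [simpleT_eq_swap, mul_assoc]
  refine ⟨r * of i * of j, r * of j * of i, ?_, ?_, ?_⟩
  · rw [mul_assoc, mul_assoc]; exact hr.mul hiji (by simp; omega)
  · rw [mul_assoc, mul_assoc]; exact hr.mul hjij (by simp; omega)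
  · simpa only [mul_assoc] using
      (braidCon n).mul ((braidCon n).refl r) (braidCon_of_mul_of_mul_of h)

lemma exists_braidCon_of_ne {s : Perm (Fin n)} {i j : Fin (n - 1)} (hij : i ≠ j)
    (hsi : s (hi i) < s (lo i)) (hsj : s (hi j) < s (lo j)) :
    ∃ x y, IsReducedWord s (x * of i) ∧ IsReducedWord s (y * of j) ∧
      braidCon n (x * of i) (y * of j) := by
  wlog hlt : (i : ℕ) < j generalizing i j
  · obtain ⟨x, y, hx, hy, hxy⟩ := this hij.symm hsj hsi (by omega)
    exact ⟨y, x, hy, hx, (braidCon n).symm hxy⟩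
  rcases (show (j : ℕ) = i + 1 ∨ (i : ℕ) + 1 < j by omega) with hadj | hfar
  · exact exists_braidCon_of_adjacent hadj hsi hsj
  · exact exists_braidCon_of_far hfar hsi hsj

theorem braidCon_of_isReducedWord {s : Perm (Fin n)} {w₁ w₂ : FreeMonoid (Fin (n - 1))}
    (h₁ : IsReducedWord s w₁) (h₂ : IsReducedWord s w₂) : braidCon n w₁ w₂ := by
  induction hN : numInversions s using Nat.strong_induction_on generalizing s w₁ w₂ with
  | _ N ih =>
  have same_last : ∀ {x y : FreeMonoid (Fin (n - 1))} {k : Fin (n - 1)},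
      IsReducedWord s (x * of k) → IsReducedWord s (y * of k) →
      braidCon n (x * of k) (y * of k) := by
    intro x y k hx hy
    obtain ⟨hx', hk⟩ := hx.of_mul_of
    have hdrop : numInversions (s * simpleT n k) + 1 = N :=
      hN ▸ numInversions_mul_swap_of_gt s (lo_covBy_hi k) hk
    exact (braidCon n).mul (ih _ (by omega) hx' hy.of_mul_of.1 rfl) ((braidCon n).refl _)
  rcases Nat.eq_zero_or_pos N with rfl | hpos
  · rw [FreeMonoid.length_eq_zero.1 (h₁.2.trans hN),
      FreeMonoid.length_eq_zero.1 (h₂.2.trans hN)]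
    exact (braidCon n).refl 1
  obtain ⟨u, i, rfl⟩ := FreeMonoid.exists_eq_mul_of_of_length_pos (by rw [h₁.2]; omega)
  obtain ⟨v, j, rfl⟩ := FreeMonoid.exists_eq_mul_of_of_length_pos (by rw [h₂.2]; omega)
  by_cases hij : i = j
  · subst hij
    exact same_last h₁ h₂
  obtain ⟨x, y, hx, hy, hxy⟩ := exists_braidCon_of_ne hij h₁.of_mul_of.2 h₂.of_mul_of.2
  exact ((same_last h₁ hx).trans hxy).trans (same_last h₂ hy).symm

end Braids
end Matsumoto

/-- Matsumoto's theorem: the Matsumoto–Tits section is well defined: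
any two reduced words of `s ∈ S_n` have the same image in the positive braid
monoid `B_n⁺`. -/
theorem matsumoto_tits_well_defined (n : ℕ) (s : Equiv.Perm (Fin n))
    (w₁ w₂ : FreeMonoid (Fin (n - 1)))
    (hw₁ : wordPerm n w₁ = s) (hl₁ : w₁.length = permLength s)
    (hw₂ : wordPerm n w₂ = s) (hl₂ : w₂.length = permLength s) :
    (braidCon n).mk' w₁ = (braidCon n).mk' w₂ := by
  rw [Matsumoto.permLength_eq_numInversions] at hl₁ hl₂
  exact (Con.eq _).2 (Matsumoto.braidCon_of_isReducedWord ⟨hw₁, hl₁⟩ ⟨hw₂, hl₂⟩)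
end
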